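/- arXiv:0707.3448 — 2 statements merged into one kernel-verified Lean document; each statement's English description precedes it below -/
import Mathlib

section
/- Let H ∈ (0,1/2) and for n ≥ 1, t ∈ [0,1], k = 0,…,n-1 define α_k(t) = (1/(2 n^{2H}))[(k+1)^{2H} - k^{2H} - |k+1 - n t|^{2H} + |k - n t|^{2H}]. Then there is a constant C (depending only on H) such that for all n, sup_{t ∈ [0,1]} Σ_{k=0}^{n-1} |α_k(t)| ≤ C. -/
lemma abs_rpow_split (p u : ℝ) (hp : 0 < p) :
    |u| ^ p = max u 0 ^ p + max (-u) 0 ^ p := by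
  rcases le_total 0 u with h | h
  · rw [abs_of_nonneg h, max_eq_left h, max_eq_right (neg_nonpos.2 h),
      Real.zero_rpow hp.ne', add_zero]
  · rw [abs_of_nonpos h, max_eq_right h, max_eq_left (neg_nonneg.2 h),
      Real.zero_rpow hp.ne', zero_add]

theorem stmt3 (H : ℝ) (hH0 : 0 < H) (hH : H < 1/2) :
    ∃ C : ℝ, ∀ n : ℕ, 1 ≤ n → ∀ t ∈ Set.Icc (0:ℝ) 1,
      ∑ k ∈ Finset.range n,
        |(1 / (2 * (n:ℝ) ^ (2*H))) *
          (((k:ℝ)+1) ^ (2*H) - (k:ℝ) ^ (2*H)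
            - |(k:ℝ)+1 - (n:ℝ)*t| ^ (2*H) + |(k:ℝ) - (n:ℝ)*t| ^ (2*H))| ≤ C := by
  set p := 2*H with hpdef
  have hp0 : 0 < p := by positivity
  refine ⟨3/2, fun n hn t ht => ?_⟩
  have hn0 : (0:ℝ) < n := by exact_mod_cast hn
  set s := (n:ℝ) * t with hsdef
  have hs0 : 0 ≤ s := mul_nonneg hn0.le ht.1
  have hsn : s ≤ n := by nlinarith [ht.2]
  have hnp : (0:ℝ) < (n:ℝ) ^ p := Real.rpow_pos_of_pos hn0 p
  set c : ℝ := 1 / (2 * (n:ℝ) ^ p) with hcdef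
  have hc0 : 0 < c := by positivity
  set Φ : ℕ → ℝ := fun k =>
    c * ((k:ℝ) ^ p + max ((k:ℝ) - s) 0 ^ p - max (s - (k:ℝ)) 0 ^ p) with hΦ
  have key : ∀ k ∈ Finset.range n,
      |c * (((k:ℝ)+1) ^ p - (k:ℝ) ^ p - |(k:ℝ)+1 - s| ^ p + |(k:ℝ) - s| ^ p)|
        ≤ Φ (k+1) - Φ k := by
    intro k _
    set a : ℝ := (k:ℝ) with ha
    have hsplit1 : |a + 1 - s| ^ p = max (a + 1 - s) 0 ^ p + max (s - (a+1)) 0 ^ p := by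
      have := abs_rpow_split p (a + 1 - s) hp0
      rw [this]; ring_nf
    have hsplit2 : |a - s| ^ p = max (a - s) 0 ^ p + max (s - a) 0 ^ p := by
      have := abs_rpow_split p (a - s) hp0
      rw [this]; ring_nf
    have hD1 : a ^ p ≤ (a + 1) ^ p :=
      Real.rpow_le_rpow (by positivity) (by linarith) hp0.le
    have hD2 : max (a - s) 0 ^ p ≤ max (a + 1 - s) 0 ^ p :=
      Real.rpow_le_rpow (le_max_right _ _)
        (max_le_max (by linarith) le_rfl) hp0.le
    have hD3 : max (s - (a+1)) 0 ^ p ≤ max (s - a) 0 ^ p :=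
      Real.rpow_le_rpow (le_max_right _ _)
        (max_le_max (by linarith) le_rfl) hp0.le
    have hΦk1 : Φ (k+1) = c * ((a+1) ^ p + max (a + 1 - s) 0 ^ p
        - max (s - (a+1)) 0 ^ p) := by
      simp only [hΦ]; push_cast; ring_nf; rw [ha]; ring_nf
    have hΦk : Φ k = c * (a ^ p + max (a - s) 0 ^ p - max (s - a) 0 ^ p) := rfl
    rw [hΦk1, hΦk, abs_mul, abs_of_pos hc0, hsplit1, hsplit2]
    rw [← mul_sub]
    have hineq : |((a:ℝ)+1) ^ p - a ^ p
        - (max (a + 1 - s) 0 ^ p + max (s - (a+1)) 0 ^ p)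
        + (max (a - s) 0 ^ p + max (s - a) 0 ^ p)|
        ≤ ((a+1) ^ p + max (a + 1 - s) 0 ^ p - max (s - (a+1)) 0 ^ p)
          - (a ^ p + max (a - s) 0 ^ p - max (s - a) 0 ^ p) := by
      rw [abs_le]
      constructor <;> nlinarith
    calc c * |((a:ℝ)+1) ^ p - a ^ p
        - (max (a + 1 - s) 0 ^ p + max (s - (a+1)) 0 ^ p)
        + (max (a - s) 0 ^ p + max (s - a) 0 ^ p)| ≤ _ :=
          mul_le_mul_of_nonneg_left hineq hc0.le
    _ = _ := by ring
  calc ∑ k ∈ Finset.range n,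
        |c * (((k:ℝ)+1) ^ p - (k:ℝ) ^ p - |(k:ℝ)+1 - s| ^ p + |(k:ℝ) - s| ^ p)|
      ≤ ∑ k ∈ Finset.range n, (Φ (k+1) - Φ k) := Finset.sum_le_sum key
    _ = Φ n - Φ 0 := Finset.sum_range_sub Φ n
    _ ≤ 3/2 := by
        have h0 : Φ 0 = c * (0 + 0 - s ^ p) := by
          simp only [hΦ]
          rw [Nat.cast_zero, Real.zero_rpow hp0.ne', zero_sub, sub_zero,
            max_eq_right (neg_nonpos.2 hs0), Real.zero_rpow hp0.ne',
            max_eq_left hs0]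
        have hns : max ((n:ℝ) - s) 0 ^ p ≤ (n:ℝ) ^ p :=
          Real.rpow_le_rpow (le_max_right _ _)
            (max_le (by linarith) hn0.le) hp0.le
        have hsn' : max (s - (n:ℝ)) 0 = 0 := max_eq_right (by linarith)
        have hsp : s ^ p ≤ (n:ℝ) ^ p := Real.rpow_le_rpow hs0 hsn hp0.le
        have hΦn : Φ n ≤ c * ((n:ℝ) ^ p + (n:ℝ) ^ p - 0) := by
          simp only [hΦ, hsn', Real.zero_rpow hp0.ne']
          apply mul_le_mul_of_nonneg_left _ hc0.le
          linarith
        have hΦ0 : -Φ 0 ≤ c * (s ^ p) := by rw [h0]; ring_nf; exact le_rfl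
        have hc : c * (n:ℝ) ^ p = 1/2 := by
          rw [hcdef]; field_simp
        nlinarith [mul_le_mul_of_nonneg_left hsp hc0.le]
end

section
/- Let H ∈ (0,1/2), q ≥ 2 an integer, and for n ≥ 1 and k = 0,…,n-1 set γ_k = (1/(2 n^{2H}))[(k+1)^{2H} - k^{2H} - 1]. Then there exists a constant C depending only on H and q such that Σ_{k=0}^{n-1} |γ_k^q - (-1)^q/(2^q n^{2qH})| ≤ C n^{-2H(q-1)} for all n ≥ 1. -/
lemma aux_abs_pow_sub (q : ℕ) : ∀ x y : ℝ, |x| ≤ 1 → |y| ≤ 1 →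
    |x ^ q - y ^ q| ≤ q * |x - y| := by
  induction q with
  | zero => intro x y _ _; simp
  | succ n ih =>
    intro x y hx hy
    have h : x ^ (n+1) - y ^ (n+1) = x ^ n * (x - y) + y * (x ^ n - y ^ n) := by ring
    rw [h]
    calc |x ^ n * (x - y) + y * (x ^ n - y ^ n)|
        ≤ |x ^ n * (x - y)| + |y * (x ^ n - y ^ n)| := abs_add_le _ _
      _ = |x| ^ n * |x - y| + |y| * |x ^ n - y ^ n| := by
          rw [abs_mul, abs_mul, abs_pow]
      _ ≤ 1 * |x - y| + 1 * ((n : ℝ) * |x - y|) := by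
          have h1 : |x| ^ n ≤ 1 := pow_le_one₀ (abs_nonneg x) hx
          have A : |x| ^ n * |x - y| ≤ 1 * |x - y| :=
            mul_le_mul_of_nonneg_right h1 (abs_nonneg _)
          have B : |y| * |x ^ n - y ^ n| ≤ 1 * ((n : ℝ) * |x - y|) :=
            mul_le_mul hy (ih x y hx hy) (abs_nonneg _) zero_le_one
          linarith
      _ = ((n : ℕ) + 1 : ℝ) * |x - y| := by ring
      _ = ((n + 1 : ℕ) : ℝ) * |x - y| := by push_cast; ring

theorem stmt4 (H : ℝ) (hH0 : 0 < H) (hH : H < 1/2) (q : ℕ) (hq : 2 ≤ q) :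
    ∃ C : ℝ, ∀ n : ℕ, 1 ≤ n →
      ∑ k ∈ Finset.range n,
        |((1 / (2 * (n:ℝ) ^ (2*H))) * (((k:ℝ)+1) ^ (2*H) - (k:ℝ) ^ (2*H) - 1)) ^ q
          - (-1 : ℝ) ^ q / (2 ^ q * (n:ℝ) ^ (2*(q:ℝ)*H))|
        ≤ C * (n:ℝ) ^ (-(2*H)*((q:ℝ)-1)) := by
  use (q : ℝ)
  intro n hn
  have hn1 : (1:ℝ) ≤ (n:ℝ) := by exact_mod_cast hn
  have hn0 : (0:ℝ) < (n:ℝ) := lt_of_lt_of_le one_pos hn1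
  have hH2 : (0:ℝ) < 2*H := by linarith
  have hH2' : 2*H ≤ 1 := by linarith
  set N : ℝ := (n:ℝ) ^ (2*H) with hN
  have hN1 : (1:ℝ) ≤ N := Real.one_le_rpow hn1 hH2.le
  have hN0 : (0:ℝ) < N := lt_of_lt_of_le one_pos hN1
  have hpow : (n:ℝ) ^ (2*(q:ℝ)*H) = N ^ q := by
    rw [hN, ← Real.rpow_natCast ((n:ℝ) ^ (2*H)) q, ← Real.rpow_mul hn0.le]
    congr 1; ring
  -- per-term bound
  have key : ∀ k ∈ Finset.range n,
      |((1 / (2 * (n:ℝ) ^ (2*H))) * (((k:ℝ)+1) ^ (2*H) - (k:ℝ) ^ (2*H) - 1)) ^ q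
          - (-1 : ℝ) ^ q / (2 ^ q * (n:ℝ) ^ (2*(q:ℝ)*H))|
        ≤ (q:ℝ) * ((((k:ℝ)+1) ^ (2*H) - (k:ℝ) ^ (2*H)) / N ^ q) := by
    intro k _
    set a : ℝ := ((k:ℝ)+1) ^ (2*H) - (k:ℝ) ^ (2*H) with ha
    have hk0 : (0:ℝ) ≤ (k:ℝ) := Nat.cast_nonneg k
    have ha0 : 0 ≤ a := by
      have : (k:ℝ) ^ (2*H) ≤ ((k:ℝ)+1) ^ (2*H) :=
        Real.rpow_le_rpow hk0 (by linarith) hH2.le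
      linarith
    have ha1 : a ≤ 1 := by
      have h := NNReal.rpow_add_le_add_rpow (k : NNReal) 1 hH2.le hH2'
      have h' := NNReal.coe_le_coe.2 h
      simp only [NNReal.coe_rpow, NNReal.coe_add, NNReal.coe_one,
        NNReal.coe_natCast, Real.one_rpow] at h'
      linarith
    have habs : |a - 1| ≤ 1 := by rw [abs_le]; constructor <;> linarith
    have hterm : (1 / (2 * (n:ℝ) ^ (2*H))) * (a - 1) = (a - 1) / (2*N) := by
      rw [hN]; ring
    have hq1 : ((1 / (2 * (n:ℝ) ^ (2*H))) * (a - 1)) ^ q = (a-1) ^ q / (2*N) ^ q := by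
      rw [hterm, div_pow]
    have h2N : (2*N) ^ q = 2 ^ q * N ^ q := by rw [mul_pow]
    have hNq0 : (0:ℝ) < N ^ q := pow_pos hN0 q
    have h2q0 : (0:ℝ) < (2:ℝ) ^ q := by positivity
    have hdiff : ((1 / (2 * (n:ℝ) ^ (2*H))) * (a - 1)) ^ q
        - (-1 : ℝ) ^ q / (2 ^ q * (n:ℝ) ^ (2*(q:ℝ)*H))
        = ((a-1) ^ q - (-1:ℝ) ^ q) / (2 ^ q * N ^ q) := by
      rw [hq1, h2N, hpow, sub_div]
    rw [hdiff, abs_div, abs_of_pos (by positivity : (0:ℝ) < 2 ^ q * N ^ q)]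
    have hnum : |(a-1) ^ q - (-1:ℝ) ^ q| ≤ (q:ℝ) * a := by
      have := aux_abs_pow_sub q (a-1) (-1) habs (by norm_num)
      have h3 : |(a - 1) - (-1)| = a := by
        rw [show (a-1) - (-1) = a by ring, abs_of_nonneg ha0]
      rw [h3] at this; exact this
    calc |(a-1) ^ q - (-1:ℝ) ^ q| / (2 ^ q * N ^ q)
        ≤ ((q:ℝ) * a) / (2 ^ q * N ^ q) := by
          apply div_le_div_of_nonneg_right hnum (by positivity) |>.trans_eq rfl
      _ ≤ ((q:ℝ) * a) / (1 * N ^ q) := by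
          apply div_le_div_of_nonneg_left (by positivity) (by positivity)
          have : (1:ℝ) ≤ 2 ^ q := one_le_pow₀ (by norm_num)
          nlinarith
      _ = (q:ℝ) * (a / N ^ q) := by ring
  calc ∑ k ∈ Finset.range n,
        |((1 / (2 * (n:ℝ) ^ (2*H))) * (((k:ℝ)+1) ^ (2*H) - (k:ℝ) ^ (2*H) - 1)) ^ q
          - (-1 : ℝ) ^ q / (2 ^ q * (n:ℝ) ^ (2*(q:ℝ)*H))|
      ≤ ∑ k ∈ Finset.range n,
          (q:ℝ) * ((((k:ℝ)+1) ^ (2*H) - (k:ℝ) ^ (2*H)) / N ^ q) :=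
        Finset.sum_le_sum key
    _ = (q:ℝ) * ((∑ k ∈ Finset.range n, (((k:ℝ)+1) ^ (2*H) - (k:ℝ) ^ (2*H))) / N ^ q) := by
        rw [Finset.sum_div, Finset.mul_sum]
    _ = (q:ℝ) * ((n:ℝ) ^ (-(2*H)*((q:ℝ)-1))) := by
        have htel : ∑ k ∈ Finset.range n, (((k:ℝ)+1) ^ (2*H) - (k:ℝ) ^ (2*H)) = N := by
          have h := Finset.sum_range_sub (fun k : ℕ => ((k:ℝ)) ^ (2*H)) n
          push_cast at h
          rw [Real.zero_rpow hH2.ne', sub_zero] at h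
          rw [h, hN]
        have hexp : (n:ℝ) ^ (-(2*H)*((q:ℝ)-1)) = N / N ^ q := by
          rw [show -(2*H)*((q:ℝ)-1) = 2*H - 2*(q:ℝ)*H by ring,
            Real.rpow_sub hn0, hpow, hN]
        rw [htel, hexp]
end
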